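/- arXiv:1105.1068 — 3 statements merged into one kernel-verified Lean document; each statement's English description precedes it below -/
import Mathlib

section
/- Let 1 ≤ m ≤ n be integers and N = m+n. For every edge path (i,j) with 1 ≤ i ≤ j ≤ N−1, the m-signature equals σ(i,j) = C(N,m) − 4·C(N−2, m−1) as integers, where C(a,b) denotes the binomial coefficient. -/
/-- The edge sign `τ_T(l)`: `+1` if `l ∈ T ↔ l+1 ∈ T`, and `-1` otherwise. -/
def edgeSign (T : Finset ℕ) (l : ℕ) : ℤ :=
  if (l ∈ T ↔ l + 1 ∈ T) then 1 else -1

/-- The `m`-signature `σ(i,j)` of the edge path `(i,j)`. -/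
def mSignature (N m i j : ℕ) : ℤ :=
  ∑ T ∈ Finset.powersetCard m (Finset.Icc 1 N), ∏ l ∈ Finset.Icc i j, edgeSign T l

/-- The product of edge signs telescopes: it only depends on membership of the endpoints. -/
lemma prod_edgeSign (T : Finset ℕ) (i j : ℕ) (hij : i ≤ j) :
    ∏ l ∈ Finset.Icc i j, edgeSign T l = if (i ∈ T ↔ j + 1 ∈ T) then 1 else -1 := by
  induction j, hij using Nat.le_induction with
  | base => simp [edgeSign]
  | succ j hij ih =>
      rw [Finset.prod_Icc_succ_top (by omega), ih]
      by_cases h1 : i ∈ T <;> by_cases h2 : j + 1 ∈ T <;> by_cases h3 : j + 1 + 1 ∈ T <;>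
        simp [edgeSign, h1, h2, h3]

/-- Counting `m`-subsets of `s` containing `a` but not `b`. -/
lemma count_filter (s : Finset ℕ) (m : ℕ) (hm : 1 ≤ m) (a b : ℕ)
    (ha : a ∈ s) (hb : b ∈ s) (hab : a ≠ b) :
    ((Finset.powersetCard m s).filter (fun T => a ∈ T ∧ b ∉ T)).card
      = (s.card - 2).choose (m - 1) := by
  have hcard : ((s.erase a).erase b).card = s.card - 2 := by
    rw [Finset.card_erase_of_mem (Finset.mem_erase.2 ⟨Ne.symm hab, hb⟩),
      Finset.card_erase_of_mem ha]
    omega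
  rw [← hcard, ← Finset.card_powersetCard]
  apply Finset.card_bij' (fun T _ => T.erase a) (fun U _ => insert a U)
  · intro T hT
    simp only [Finset.mem_filter] at hT
    exact Finset.insert_erase hT.2.1
  · intro U hU
    rw [Finset.mem_powersetCard] at hU
    have haU : a ∉ U := fun h =>
      (Finset.mem_erase.1 (Finset.mem_erase.1 (hU.1 h)).2).1 rfl
    exact Finset.erase_insert haU
  · intro T hT
    simp only [Finset.mem_filter, Finset.mem_powersetCard] at hT
    obtain ⟨⟨hTs, hTc⟩, haT, hbT⟩ := hT
    rw [Finset.mem_powersetCard]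
    constructor
    · intro x hx
      rw [Finset.mem_erase] at hx
      refine Finset.mem_erase.2 ⟨?_, Finset.mem_erase.2 ⟨hx.1, hTs hx.2⟩⟩
      rintro rfl; exact hbT hx.2
    · rw [Finset.card_erase_of_mem haT, hTc]
  · intro U hU
    rw [Finset.mem_powersetCard] at hU
    obtain ⟨hUs, hUc⟩ := hU
    have haU : a ∉ U := fun h =>
      (Finset.mem_erase.1 (Finset.mem_erase.1 (hUs h)).2).1 rfl
    simp only [Finset.mem_filter, Finset.mem_powersetCard]
    refine ⟨⟨?_, ?_⟩, Finset.mem_insert_self a U, ?_⟩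
    · intro x hx
      rcases Finset.mem_insert.1 hx with rfl | hx
      · exact ha
      · exact (Finset.mem_erase.1 (Finset.mem_erase.1 (hUs hx)).2).2
    · rw [Finset.card_insert_of_notMem haU, hUc]; omega
    · intro h
      rcases Finset.mem_insert.1 h with rfl | h
      · exact hab rfl
      · exact (Finset.mem_erase.1 (hUs h)).1 rfl

/-- For `1 ≤ m ≤ n`, `N = m + n`, and every edge path `(i,j)` with `1 ≤ i ≤ j ≤ N − 1`,
the `m`-signature equals `σ(i,j) = C(N,m) − 4·C(N−2, m−1)` as integers. -/
theorem mSignature_eq_choose (m n : ℕ) (hm : 1 ≤ m) (hmn : m ≤ n)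
    (i j : ℕ) (hi : 1 ≤ i) (hij : i ≤ j) (hj : j ≤ m + n - 1) :
    mSignature (m + n) m i j =
      ((m + n).choose m : ℤ) - 4 * ((m + n - 2).choose (m - 1) : ℤ) := by
  set N := m + n with hN
  set s := Finset.Icc 1 N with hs
  set P := Finset.powersetCard m s with hP
  have ha : i ∈ s := by rw [hs, Finset.mem_Icc]; omega
  have hb : j + 1 ∈ s := by rw [hs, Finset.mem_Icc]; omega
  have hab : i ≠ j + 1 := by omega
  have hscard : s.card = N := by rw [hs, Nat.card_Icc]; omega
  unfold mSignature
  rw [Finset.sum_congr rfl (fun T _ => prod_edgeSign T i j hij)]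
  rw [Finset.sum_ite]
  simp only [Finset.sum_const, smul_eq_mul, mul_one, mul_neg_one, nsmul_eq_mul]
  set Q : Finset ℕ → Prop := fun T => (i ∈ T ↔ j + 1 ∈ T) with hQ
  have hsplit : (P.filter (fun T => ¬ Q T)) =
      P.filter (fun T => i ∈ T ∧ j + 1 ∉ T) ∪ P.filter (fun T => j + 1 ∈ T ∧ i ∉ T) := by
    ext T
    simp only [Finset.mem_union, Finset.mem_filter, hQ]
    tauto
  have hdisj : Disjoint (P.filter (fun T => i ∈ T ∧ j + 1 ∉ T))
      (P.filter (fun T => j + 1 ∈ T ∧ i ∉ T)) := by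
    rw [Finset.disjoint_left]
    intro T h1 h2
    simp only [Finset.mem_filter] at h1 h2
    exact h2.2.2 h1.2.1
  have hc1 : (P.filter (fun T => i ∈ T ∧ j + 1 ∉ T)).card = (N - 2).choose (m - 1) := by
    rw [hP, ← hscard]; exact count_filter s m hm i (j+1) ha hb hab
  have hc2 : (P.filter (fun T => j + 1 ∈ T ∧ i ∉ T)).card = (N - 2).choose (m - 1) := by
    rw [hP, ← hscard]; exact count_filter s m hm (j+1) i hb ha (Ne.symm hab)
  have hBcard : (P.filter (fun T => ¬ Q T)).card = 2 * (N - 2).choose (m - 1) := by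
    rw [hsplit, Finset.card_union_of_disjoint hdisj, hc1, hc2]; ring
  have hPcard : P.card = N.choose m := by
    rw [hP, Finset.card_powersetCard, hscard]
  have hsum : (P.filter Q).card + (P.filter (fun T => ¬ Q T)).card = P.card :=
    Finset.card_filter_add_card_filter_not _
  have hA : (P.filter Q).card = N.choose m - 2 * (N - 2).choose (m - 1) := by omega
  have hle : 2 * (N - 2).choose (m - 1) ≤ N.choose m := by omega
  rw [hA, hBcard]
  push_cast [hle]
  ring
end

section
/- Let N ≥ 2 and 1 ≤ m ≤ N be integers, and let S ⊆ {1,…,N} be any subset with |S| = k ≥ 2, whose elements listed in increasing order are s₁ < s₂ < … < s_k. For a subset T ⊆ {1,…,N}, define the T-signature of S as σ_T(S) = ∏_{a=1}^{k−1} (−1)^{χ_T(s_a) + χ_T(s_{a+1})}, where χ_T is the 0/1 indicator function of T. Then Σ_{T ⊆ {1,…,N}, |T| = m} σ_T(S) = C(N,m) − 4·C(N−2, m−1) as integers; in particular the sum depends only on N and m, not on S. -/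
/-- The 0/1 indicator function `χ_T` of a finite set `T ⊆ ℕ`. -/
def chi (T : Finset ℕ) (x : ℕ) : ℕ :=
  if x ∈ T then 1 else 0

private lemma neg_one_pow_self_mul (c : ℕ) : ((-1 : ℤ)) ^ c * (-1) ^ c = 1 := by
  rw [← pow_add]
  exact Even.neg_one_pow ⟨c, rfl⟩

/-- Telescoping of the signature product. -/
private lemma prod_sign (T : Finset ℕ) (s : ℕ → ℕ) (j : ℕ) :
    ∏ a ∈ Finset.range j, (-1 : ℤ) ^ (chi T (s a) + chi T (s (a + 1))) =
      (-1) ^ (chi T (s 0)) * (-1) ^ (chi T (s j)) := by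
  induction j with
  | zero => simp [neg_one_pow_self_mul]
  | succ j ih =>
      rw [Finset.prod_range_succ, ih, pow_add]
      have h : ((-1 : ℤ) ^ (chi T (s 0)) * (-1) ^ (chi T (s j))) *
          ((-1) ^ (chi T (s j)) * (-1) ^ (chi T (s (j + 1)))) =
          ((-1) ^ (chi T (s 0)) * (-1) ^ (chi T (s (j + 1)))) *
          ((-1) ^ (chi T (s j)) * (-1) ^ (chi T (s j))) := by ring
      rw [h, neg_one_pow_self_mul, mul_one]

/-- Splitting a sum over `powersetCard (n+1)` of `insert x s` by membership of `x`. -/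
private lemma sum_powersetCard_insert {α : Type*} [DecidableEq α] {x : α} {s : Finset α}
    (h : x ∉ s) (n : ℕ) (f : Finset α → ℤ) :
    ∑ T ∈ Finset.powersetCard (n + 1) (insert x s), f T =
      (∑ T ∈ Finset.powersetCard (n + 1) s, f T) +
      ∑ T ∈ Finset.powersetCard n s, f (insert x T) := by
  rw [Finset.powersetCard_succ_insert h, Finset.sum_union, Finset.sum_image]
  · intro a ha b hb hab
    have hxa : x ∉ a := fun hx => h ((Finset.mem_powersetCard.1 ha).1 hx)
    have hxb : x ∉ b := fun hx => h ((Finset.mem_powersetCard.1 hb).1 hx)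
    rw [← Finset.erase_insert hxa, ← Finset.erase_insert hxb, hab]
  · rw [Finset.disjoint_left]
    intro T hT hT'
    obtain ⟨A, -, rfl⟩ := Finset.mem_image.1 hT'
    exact h ((Finset.mem_powersetCard.1 hT).1 (Finset.mem_insert_self x A))

/-- Sum of `(-1)^(χ_T y)` over `j`-subsets of a set `v` containing `y`. -/
private lemma sum_sign_one (v : Finset ℕ) (y : ℕ) (hy : y ∈ v) (j : ℕ) :
    ∑ T ∈ Finset.powersetCard (j + 1) v, (-1 : ℤ) ^ (chi T y) =
      ((v.card - 1).choose (j + 1) : ℤ) - ((v.card - 1).choose j : ℤ) := by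
  have hrw : v = insert y (v.erase y) := (Finset.insert_erase hy).symm
  rw [hrw, sum_powersetCard_insert (Finset.notMem_erase y v) j]
  have h1 : ∀ T ∈ Finset.powersetCard (j + 1) (v.erase y), (-1 : ℤ) ^ (chi T y) = 1 := by
    intro T hT
    have : y ∉ T := fun hyT =>
      Finset.notMem_erase y v ((Finset.mem_powersetCard.1 hT).1 hyT)
    simp [chi, this]
  have h2 : ∀ T ∈ Finset.powersetCard j (v.erase y),
      (-1 : ℤ) ^ (chi (insert y T) y) = -1 := by
    intro T hT
    simp [chi]
  rw [Finset.sum_congr rfl h1, Finset.sum_congr rfl h2]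
  have hc : (v.erase y).card = v.card - 1 := Finset.card_erase_of_mem hy
  simp [Finset.card_powersetCard, hc]
  ring

/-- Let `N ≥ 2`, `1 ≤ m ≤ N`, and let `S ⊆ {1,…,N}` with `|S| = k ≥ 2`, whose elements
listed in increasing order are `s 0 < s 1 < … < s (k-1)` (enumerated by a function
`s` strictly monotone on `{0,…,k-1}` with image `S`).  With the `T`-signature
`σ_T(S) = ∏_{a=0}^{k-2} (−1)^{χ_T(s a) + χ_T(s (a+1))}`, one has
`Σ_{T ⊆ {1,…,N}, |T| = m} σ_T(S) = C(N,m) − 4·C(N−2, m−1)` as integers. -/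
theorem sum_T_signature_eq (N m k : ℕ) (hN : 2 ≤ N) (hm : 1 ≤ m) (hmN : m ≤ N)
    (S : Finset ℕ) (hS : S ⊆ Finset.Icc 1 N) (hk2 : 2 ≤ k) (hcard : S.card = k)
    (s : ℕ → ℕ) (hmono : StrictMonoOn s (Set.Iio k))
    (himg : Finset.image s (Finset.range k) = S) :
    ∑ T ∈ Finset.powersetCard m (Finset.Icc 1 N),
        ∏ a ∈ Finset.range (k - 1), (-1 : ℤ) ^ (chi T (s a) + chi T (s (a + 1))) =
      (N.choose m : ℤ) - 4 * ((N - 2).choose (m - 1) : ℤ) := by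
  classical
  set u : Finset ℕ := Finset.Icc 1 N with hu
  set x := s 0 with hxdef
  set y := s (k - 1) with hydef
  have hcu : u.card = N := by simp [hu]
  have hx : x ∈ u := by
    apply hS; rw [← himg]
    exact Finset.mem_image.2 ⟨0, Finset.mem_range.2 (by omega), rfl⟩
  have hy : y ∈ u := by
    apply hS; rw [← himg]
    exact Finset.mem_image.2 ⟨k - 1, Finset.mem_range.2 (by omega), rfl⟩
  have hxy : x ≠ y := by
    have := hmono (show (0 : ℕ) ∈ Set.Iio k by simp; omega)
      (show k - 1 ∈ Set.Iio k by simp; omega) (by omega)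
    omega
  -- rewrite the product as a pair of signs
  have hprod : ∀ T : Finset ℕ,
      ∏ a ∈ Finset.range (k - 1), (-1 : ℤ) ^ (chi T (s a) + chi T (s (a + 1))) =
        (-1) ^ (chi T x) * (-1) ^ (chi T y) := fun T => prod_sign T s (k - 1)
  rw [Finset.sum_congr rfl fun T _ => hprod T]
  -- split by membership of x
  obtain ⟨m', rfl⟩ : ∃ m', m = m' + 1 := ⟨m - 1, by omega⟩
  have hxu : u = insert x (u.erase x) := (Finset.insert_erase hx).symm
  rw [hxu, sum_powersetCard_insert (Finset.notMem_erase x u) m']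
  have hyu : y ∈ u.erase x := Finset.mem_erase.2 ⟨hxy.symm, hy⟩
  have hcu' : (u.erase x).card = N - 1 := by rw [Finset.card_erase_of_mem hx, hcu]
  have hstep1 : ∀ T ∈ Finset.powersetCard (m' + 1) (u.erase x),
      (-1 : ℤ) ^ (chi T x) * (-1) ^ (chi T y) = (-1) ^ (chi T y) := by
    intro T hT
    have : x ∉ T := fun hxT =>
      Finset.notMem_erase x u ((Finset.mem_powersetCard.1 hT).1 hxT)
    simp [chi, this]
  have hstep2 : ∀ T ∈ Finset.powersetCard m' (u.erase x),
      (-1 : ℤ) ^ (chi (insert x T) x) * (-1) ^ (chi (insert x T) y) =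
        -((-1) ^ (chi T y)) := by
    intro T hT
    have hyi : chi (insert x T) y = chi T y := by
      simp [chi, Finset.mem_insert, hxy.symm]
    rw [hyi]
    simp only [chi, Finset.mem_insert_self, if_pos]
    split_ifs <;> ring
  rw [Finset.sum_congr rfl hstep1, Finset.sum_congr rfl hstep2, Finset.sum_neg_distrib]
  have hA1 : ∑ T ∈ Finset.powersetCard (m' + 1) (u.erase x), (-1 : ℤ) ^ (chi T y) =
      ((N - 2).choose (m' + 1) : ℤ) - ((N - 2).choose m' : ℤ) := by
    rw [sum_sign_one (u.erase x) y hyu m', hcu']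
    congr 2 <;> omega
  rw [hA1]
  rcases Nat.eq_zero_or_pos m' with hm0 | hm1
  · -- m = 1
    subst hm0
    have hA0 : ∑ T ∈ Finset.powersetCard 0 (u.erase x), (-1 : ℤ) ^ (chi T y) = 1 := by
      simp [chi]
    rw [hA0]
    obtain ⟨n, rfl⟩ : ∃ n, N = n + 2 := ⟨N - 2, by omega⟩
    simp [Nat.choose_one_right]
    push_cast
    ring
  · obtain ⟨m'', rfl⟩ : ∃ m'', m' = m'' + 1 := ⟨m' - 1, by omega⟩
    have hA0 : ∑ T ∈ Finset.powersetCard (m'' + 1) (u.erase x), (-1 : ℤ) ^ (chi T y) =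
        ((N - 2).choose (m'' + 1) : ℤ) - ((N - 2).choose m'' : ℤ) := by
      rw [sum_sign_one (u.erase x) y hyu m'', hcu']
      congr 2 <;> omega
    rw [hA0]
    obtain ⟨n, rfl⟩ : ∃ n, N = n + 2 := ⟨N - 2, by omega⟩
    have hpascal : (n + 2).choose (m'' + 2) =
        n.choose (m'' + 2) + 2 * n.choose (m'' + 1) + n.choose m'' := by
      rw [Nat.choose_succ_succ (n + 1) (m'' + 1), Nat.choose_succ_succ n m'',
        Nat.choose_succ_succ n (m'' + 1)]
      ring
    have hred : n + 2 - 2 = n := by omega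
    have hred2 : m'' + 1 + 1 - 1 = m'' + 1 := by omega
    rw [hred, hred2, hpascal]
    push_cast
    ring
end

section
/- Let N ≥ 2, 2 ≤ k ≤ N and 1 ≤ m ≤ N be integers. Then Σ_{T ⊆ {1,…,N}, |T| = m} ∏_{l=1}^{k−1} (−1)^{χ_T(l)+χ_T(l+1)} = C(N,m) − 4·Σ_{i=1}^{k−1} C(k−2, i−1)·C(N−k, m−i) as integers, where χ_T is the 0/1 indicator function of T, C(a,b) denotes the binomial coefficient, and terms C(N−k, m−i) with i > m are taken to be 0. -/
open Finset

theorem prod_Ico_mul_succ_of_mul_self_eq_one {M : Type*} [CommMonoid M] {g : ℕ → M}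
    (hg : ∀ l, g l * g l = 1) {a b : ℕ} (hab : a ≤ b) :
    ∏ l ∈ Ico a b, g l * g (l + 1) = g a * g b := by
  induction b, hab using Nat.le_induction with
  | base => rw [Ico_self, prod_empty, hg]
  | succ b hab ih =>
    rw [prod_Ico_succ_top hab, ih, mul_assoc, ← mul_assoc (g b), hg, one_mul]

theorem card_filter_powersetCard_mem_notMem {α : Type*} [DecidableEq α] {u : Finset α}
    {a b : α} (ha : a ∈ u) (hb : b ∈ u) (hab : a ≠ b) (m : ℕ) :
    #{T ∈ u.powersetCard (m + 1) | a ∈ T ∧ b ∉ T} = (#u - 2).choose m := by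
  have hfilter : {T ∈ u.powersetCard (m + 1) | a ∈ T ∧ b ∉ T} =
      {T ∈ (u.erase b).powersetCard (m + 1) | {a} ⊆ T} := by
    ext T
    simp only [mem_filter, mem_powersetCard, subset_erase, singleton_subset_iff]
    tauto
  have ha' : {a} ⊆ u.erase b := singleton_subset_iff.2 (mem_erase.2 ⟨hab, ha⟩)
  rw [hfilter, card_filter_powersetCard_subset _ _ _ ha' (by simp), card_erase_of_mem hb,
    card_singleton, Nat.add_sub_cancel, Nat.sub_sub]

theorem neg_one_pow_chi_add_chi (T : Finset ℕ) (a b : ℕ) :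
    (-1 : ℤ) ^ (chi T a + chi T b) =
      1 - 2 * ((if a ∈ T ∧ b ∉ T then 1 else 0) + (if b ∈ T ∧ a ∉ T then 1 else 0)) := by
  unfold chi
  split_ifs <;> simp_all

theorem sum_powersetCard_neg_one_pow_chi_add_chi {u : Finset ℕ} {a b : ℕ} (ha : a ∈ u)
    (hb : b ∈ u) (hab : a ≠ b) (m : ℕ) :
    ∑ T ∈ u.powersetCard (m + 1), (-1 : ℤ) ^ (chi T a + chi T b) =
      ((#u).choose (m + 1) : ℤ) - 4 * ((#u - 2).choose m : ℤ) := by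
  simp_rw [neg_one_pow_chi_add_chi, sum_sub_distrib, ← mul_sum, sum_add_distrib, sum_boole,
    card_filter_powersetCard_mem_notMem ha hb hab,
    card_filter_powersetCard_mem_notMem hb ha hab.symm, sum_const, card_powersetCard, nsmul_one]
  ring

theorem add_choose_eq_sum_range (p q r : ℕ) :
    (p + q).choose r =
      ∑ j ∈ range (p + 1), if j ≤ r then p.choose j * q.choose (r - j) else 0 := by
  rw [Nat.add_choose_eq, Nat.sum_antidiagonal_eq_sum_range_succ_mk, ← sum_filter]
  refine (sum_subset (fun j => by simp only [mem_filter, mem_range]; omega) ?_).symm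
  intro j hj hj'
  simp only [mem_filter, mem_range, not_and, not_le] at hj hj'
  rw [Nat.choose_eq_zero_of_lt (by omega), zero_mul]

theorem sum_signature_initial_segment_general (N k m : ℕ) (hk2 : 2 ≤ k)
    (hkN : k ≤ N) (hm : 1 ≤ m) :
    ∑ T ∈ Finset.powersetCard m (Finset.Icc 1 N),
        ∏ l ∈ Finset.Icc 1 (k - 1), (-1 : ℤ) ^ (chi T l + chi T (l + 1)) =
      (N.choose m : ℤ) -
        4 * ∑ i ∈ Finset.Icc 1 (k - 1),
          (if i ≤ m then ((k - 2).choose (i - 1) : ℤ) * ((N - k).choose (m - i) : ℤ)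
           else 0) := by
  obtain ⟨j, rfl⟩ : ∃ j, m = j + 1 := ⟨m - 1, by omega⟩
  have hsignature (T : Finset ℕ) :
      ∏ l ∈ Icc 1 (k - 1), (-1 : ℤ) ^ (chi T l + chi T (l + 1)) = (-1) ^ (chi T 1 + chi T k) := by
    simp_rw [pow_add]
    rw [← Ico_add_one_right_eq_Icc, Nat.sub_add_cancel (by omega),
      prod_Ico_mul_succ_of_mul_self_eq_one
        (fun l => by simp [← pow_add, ← two_mul, pow_mul]) (by omega)]
  have hvandermonde : ((N - 2).choose j : ℤ) = ∑ i ∈ Icc 1 (k - 1),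
      (if i ≤ j + 1 then ((k - 2).choose (i - 1) : ℤ) * ((N - k).choose (j + 1 - i) : ℤ) else 0) := by
    have hsplit : N - 2 = (k - 2) + (N - k) := by omega
    rw [hsplit, add_choose_eq_sum_range, ← Ico_add_one_right_eq_Icc, sum_Ico_eq_sum_range,
      show k - 1 + 1 - 1 = k - 2 + 1 by omega]
    push_cast
    refine sum_congr rfl fun i _ => ?_
    simp only [show 1 + i - 1 = i by omega, show j + 1 - (1 + i) = j - i by omega,
      show 1 + i ≤ j + 1 ↔ i ≤ j by omega]
  rw [sum_congr rfl fun T _ => hsignature T,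
    sum_powersetCard_neg_one_pow_chi_add_chi (by simp; omega) (by simp; omega) (by omega),
    Nat.card_Icc, Nat.add_sub_cancel, hvandermonde]

/-- Let `N ≥ 2`, `2 ≤ k ≤ N` and `1 ≤ m ≤ N`.  Then
`Σ_{T ⊆ {1,…,N}, |T| = m} ∏_{l=1}^{k−1} (−1)^{χ_T(l)+χ_T(l+1)}
  = C(N,m) − 4·Σ_{i=1}^{k−1} C(k−2, i−1)·C(N−k, m−i)` as integers, where the terms
with `i > m` are taken to be `0`. -/
theorem sum_signature_initial_segment (N k m : ℕ) (hN : 2 ≤ N) (hk2 : 2 ≤ k)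
    (hkN : k ≤ N) (hm : 1 ≤ m) (hmN : m ≤ N) :
    ∑ T ∈ Finset.powersetCard m (Finset.Icc 1 N),
        ∏ l ∈ Finset.Icc 1 (k - 1), (-1 : ℤ) ^ (chi T l + chi T (l + 1)) =
      (N.choose m : ℤ) -
        4 * ∑ i ∈ Finset.Icc 1 (k - 1),
          (if i ≤ m then ((k - 2).choose (i - 1) : ℤ) * ((N - k).choose (m - i) : ℤ)
           else 0) :=
  sum_signature_initial_segment_general N k m hk2 hkN hm
end
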